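/- In the TTC iteration with step sizes η_k = θ(1−θ)^k W₁(μ₀,ν), the composed maps T_n = T_{n−1} ∘ g_{n−1} (with g_{n−1}(x) = x + η_{n−1}∇u₀(x) a.e.) are optimal transport maps for (μ_n, ν) and satisfy ℓ₀(T_n) ≥ ℓ₀(T₀) − W₁(μ₀,ν)(1 − (1−θ)^n), for all 0 ≤ n ≤ N(θ). -/

import Mathlib

open MeasureTheory

noncomputable section

abbrev Euc (d : ℕ) := EuclideanSpace ℝ (Fin d)

/-- The Wasserstein-1 distance, defined through Kantorovich duality as the supremum of
`∫ u dμ - ∫ u dν` over 1-Lipschitz functions `u`. -/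
def W1 {d : ℕ} (μ ν : Measure (Euc d)) : ℝ :=
  sSup {r : ℝ | ∃ u : Euc d → ℝ, LipschitzWith 1 u ∧ r = (∫ x, u x ∂μ) - ∫ y, u y ∂ν}

/-- `u` is a Kantorovich potential for the pair `(μ, ν)`. -/
def IsKantorovichPotential {d : ℕ} (u : Euc d → ℝ) (μ ν : Measure (Euc d)) : Prop :=
  LipschitzWith 1 u ∧ (∫ x, u x ∂μ) - ∫ y, u y ∂ν = W1 μ ν

/-- `T` is an optimal transport map for the pair `(μ, ν)`. -/
def IsOptimalMap {d : ℕ} (T : Euc d → Euc d) (μ ν : Measure (Euc d)) : Prop :=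
  Measure.map T μ = ν ∧ (∫ x, ‖x - T x‖ ∂μ) = W1 μ ν

/-- The minimal transport length `ℓ₀(T) = essinf_μ |Id - T|`. -/
def ell0 {d : ℕ} (T : Euc d → Euc d) (μ : Measure (Euc d)) : ℝ :=
  essInf (fun x => ‖x - T x‖) μ


/-!
Optimality of `T₀` against the potential `u₀` forces equality in the Lipschitz bound
`u₀ x - u₀ (T₀ x) ≤ ‖x - T₀ x‖` for `μ`-a.e. `x`: `u₀` then decreases at unit speed along the
segment from `x` to `T₀ x`. Where `u₀` is differentiable (a.e., by Rademacher) its gradient is the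
unit direction of that segment, and at every interior point of the segment `u₀` is differentiable
with the same gradient. Hence a step `f = id - η ∇u₀` with `η` below the shortest ray length
moves each point along its own ray, `g = id + η ∇u₀` moves it back, and `T ∘ g` transports
`f_# μ` to `ν` along rays that are shorter by exactly `η`. Equality in the Lipschitz bound makes
`T ∘ g` optimal by Kantorovich duality, and the choice of `N(θ)` keeps the rays of positive
length up to step `N(θ)`.
-/

open Set Filter Topology
open scoped RealInnerProductSpace

theorem LipschitzWith.sub_le_norm_sub {E : Type*} [SeminormedAddCommGroup E] {u : E → ℝ}
    (hu : LipschitzWith 1 u) (x y : E) : u x - u y ≤ ‖x - y‖ := by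
  have h := hu.le_add_mul x y
  rw [NNReal.coe_one, one_mul, dist_eq_norm] at h
  linarith

theorem LipschitzWith.apply_sub_smul_eq_of_mem_Icc {E : Type*} [NormedAddCommGroup E]
    [NormedSpace ℝ E] {u : E → ℝ} (hu : LipschitzWith 1 u) {x e : E} (he : ‖e‖ = 1) {L : ℝ}
    (hL : u x - u (x - L • e) = L) {s : ℝ} (hs : s ∈ Icc 0 L) : u (x - s • e) = u x - s := by
  have h₁ := hu.sub_le_norm_sub x (x - s • e)
  have h₂ := hu.sub_le_norm_sub (x - s • e) (x - L • e)
  rw [sub_sub_cancel, norm_smul, he, mul_one, Real.norm_of_nonneg hs.1] at h₁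
  rw [sub_sub_sub_cancel_left, ← sub_smul, norm_smul, he, mul_one,
    Real.norm_of_nonneg (sub_nonneg.2 hs.2)] at h₂
  linarith

section Ray

variable {E : Type*} [NormedAddCommGroup E] [InnerProductSpace ℝ E] {u : E → ℝ}

theorem norm_add_smul_le_of_norm_eq_one {e : E} (he : ‖e‖ = 1) (h : E) {δ : ℝ} (hδ : 0 < δ) :
    ‖h + δ • e‖ ≤ δ + ⟪h, e⟫ + ‖h‖ ^ 2 / (2 * δ) := by
  have hsq : ‖h + δ • e‖ ^ 2 = ‖h‖ ^ 2 + 2 * δ * ⟪h, e⟫ + δ ^ 2 := by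
    rw [norm_add_sq_real, real_inner_smul_right, norm_smul, Real.norm_of_nonneg hδ.le, he]
    ring
  have hcs : -‖h‖ ≤ ⟪h, e⟫ := by
    simpa [he] using neg_le_of_abs_le (abs_real_inner_le_norm h e)
  have hq : 2 * δ * (‖h‖ ^ 2 / (2 * δ)) = ‖h‖ ^ 2 := by field_simp
  rw [← sq_le_sq₀ (norm_nonneg _) (by nlinarith [sq_nonneg (δ - ‖h‖)]), hsq]
  nlinarith [sq_nonneg (⟪h, e⟫ + ‖h‖ ^ 2 / (2 * δ))]

variable [CompleteSpace E]

/-- Comparing `u (z + h)` with the values of `u` at `z ± δ • e` squeezes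
`u (z + h) - u z - ⟪e, h⟫` between `±‖h‖ ^ 2 / (2 * δ)`. -/
theorem LipschitzWith.hasGradientAt_of_apply_add_smul (hu : LipschitzWith 1 u) {z e : E}
    (he : ‖e‖ = 1) {δ : ℝ} (hδ : 0 < δ) (hplus : u (z + δ • e) = u z + δ)
    (hminus : u (z - δ • e) = u z - δ) : HasGradientAt u e z := by
  rw [hasGradientAt_iff_isLittleO_nhds_zero]
  refine Asymptotics.IsBigO.trans_isLittleO ?_ (Asymptotics.isLittleO_norm_pow_id one_lt_two)
  refine Asymptotics.IsBigO.of_bound (1 / (2 * δ)) (Eventually.of_forall fun h => ?_)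
  have hupper := hu.sub_le_norm_sub (z + h) (z - δ • e)
  have hlower := hu.sub_le_norm_sub (z + δ • e) (z + h)
  rw [show z + h - (z - δ • e) = h + δ • e by abel] at hupper
  rw [show z + δ • e - (z + h) = -h + δ • e by abel] at hlower
  have h₁ := norm_add_smul_le_of_norm_eq_one he h hδ
  have h₂ := norm_add_smul_le_of_norm_eq_one he (-h) hδ
  rw [inner_neg_left, norm_neg] at h₂
  rw [Real.norm_eq_abs, norm_pow, norm_norm, real_inner_comm, abs_le, div_mul_eq_mul_div,
    one_mul]
  constructor <;> linarith

theorem LipschitzWith.hasGradientAt_sub_smul (hu : LipschitzWith 1 u) {x e : E}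
    (he : ‖e‖ = 1) {L : ℝ} (hL : u x - u (x - L • e) = L) {t : ℝ} (ht : t ∈ Ioo 0 L) :
    HasGradientAt u e (x - t • e) := by
  obtain ⟨ht0, htL⟩ := ht
  have hδ : 0 < min t (L - t) := lt_min ht0 (sub_pos.2 htL)
  have hδt := min_le_left t (L - t)
  have hδL := min_le_right t (L - t)
  have hray (s : ℝ) (hs : s ∈ Icc 0 L) := hu.apply_sub_smul_eq_of_mem_Icc he hL hs
  apply hu.hasGradientAt_of_apply_add_smul he hδ
  · rw [show x - t • e + min t (L - t) • e = x - (t - min t (L - t)) • e by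
      rw [sub_smul]; abel, hray _ ⟨by linarith, by linarith⟩, hray _ ⟨ht0.le, htL.le⟩]
    ring
  · rw [sub_sub, ← add_smul, hray _ ⟨by linarith, by linarith⟩, hray _ ⟨ht0.le, htL.le⟩]
    ring

/-- The derivative of `u` in direction `e` is `1`, which for a gradient of norm at most `1`
forces it to be `e`. -/
theorem LipschitzWith.gradient_eq_of_apply_sub_smul (hu : LipschitzWith 1 u) {x e : E}
    (he : ‖e‖ = 1) {L : ℝ} (hL0 : 0 < L) (hL : u x - u (x - L • e) = L)
    (hd : DifferentiableAt ℝ u x) : gradient u x = e := by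
  have hline : HasDerivAt (fun s : ℝ => u (x - s • e)) ⟪gradient u x, -e⟫ 0 := by
    have hψ : HasDerivAt (fun s : ℝ => x - s • e) (-e) 0 := by
      simpa using ((hasDerivAt_id (0 : ℝ)).smul_const e).const_sub x
    have hu' : HasFDerivAt u (fderiv ℝ u x) (x - (0 : ℝ) • e) := by simpa using hd.hasFDerivAt
    rw [inner_gradient_left]
    exact hu'.comp_hasDerivAt 0 hψ
  have hinner : ⟪gradient u x, e⟫ = 1 := by
    have hcongr : HasDerivWithinAt (fun s : ℝ => u (x - s • e)) (-1) (Ici 0) 0 := by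
      refine ((hasDerivAt_id (0 : ℝ)).const_sub (u x)).hasDerivWithinAt.congr_of_eventuallyEq
        ?_ (by simp)
      filter_upwards [Ico_mem_nhdsGE hL0] with s hs
      exact hu.apply_sub_smul_eq_of_mem_Icc he hL ⟨hs.1, hs.2.le⟩
    have := (uniqueDiffWithinAt_Ici 0).eq_deriv _ hline.hasDerivWithinAt hcongr
    rw [inner_neg_right] at this
    linarith
  have hnorm : ‖gradient u x‖ ≤ 1 := by
    rw [← (InnerProductSpace.toDual ℝ E).norm_map, toDual_gradient]
    simpa using norm_fderiv_le_of_lipschitz ℝ hu (x₀ := x)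
  have hnorm_eq : ‖gradient u x‖ = 1 :=
    le_antisymm hnorm (by simpa [hinner, he] using real_inner_le_norm (gradient u x) e)
  exact (inner_eq_one_iff_of_norm_eq_one hnorm_eq he).1 hinner

end Ray

/-- `[x, y]` is a transport ray of `u` (along which `u` drops by its full length) of length at
least `c`, whose upper end `x` lies in `Ω` and is a point of differentiability of `u`. -/
def IsTransportRay {E : Type*} [NormedAddCommGroup E] [NormedSpace ℝ E] (Ω : Set E)
    (u : E → ℝ) (c : ℝ) (x y : E) : Prop :=
  x ∈ Ω ∧ c ≤ ‖x - y‖ ∧ u x - u y = ‖x - y‖ ∧ DifferentiableAt ℝ u x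

theorem IsTransportRay.sub_smul_gradient {E : Type*} [NormedAddCommGroup E] [InnerProductSpace ℝ E]
    [CompleteSpace E] {Ω : Set E} {u : E → ℝ} {c η : ℝ} {x y : E} (hΩ : Convex ℝ Ω)
    (hu : LipschitzWith 1 u) (h : IsTransportRay Ω u c x y) (hy : y ∈ Ω) (hη : 0 < η)
    (hηc : η < c) :
    x - η • gradient u x + η • gradient u (x - η • gradient u x) = x ∧
      IsTransportRay Ω u (c - η) (x - η • gradient u x) y := by
  obtain ⟨hx, hc, hxy, hd⟩ := h
  set L := ‖x - y‖
  have hηL : η < L := hηc.trans_le hc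
  have hL : 0 < L := hη.trans hηL
  set e := L⁻¹ • (x - y)
  have he : ‖e‖ = 1 := by rw [norm_smul, norm_inv, norm_norm, inv_mul_cancel₀ hL.ne']
  have hye : y = x - L • e := by rw [smul_inv_smul₀ hL.ne', sub_sub_cancel]
  have hray : u x - u (x - L • e) = L := by rw [← hye]; exact hxy
  have hz := hu.hasGradientAt_sub_smul he hray ⟨hη, hηL⟩
  have hzy : x - η • e - y = (L - η) • e := by rw [hye, sub_smul]; abel
  have hzy_norm : ‖x - η • e - y‖ = L - η := by
    rw [hzy, norm_smul, he, mul_one, Real.norm_of_nonneg (sub_nonneg.2 hηL.le)]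
  rw [hu.gradient_eq_of_apply_sub_smul he hL hray hd, hz.gradient, sub_add_cancel]
  refine ⟨rfl, ?_, by rw [hzy_norm]; linarith, ?_, hz.differentiableAt⟩
  · have hmem := hΩ.add_smul_sub_mem hx hy
      ⟨div_nonneg hη.le hL.le, (div_le_one hL).2 hηL.le⟩
    rwa [hye, sub_sub_cancel_left, smul_neg, smul_smul, div_mul_cancel₀ _ hL.ne',
      ← sub_eq_add_neg] at hmem
  · rw [hzy_norm, hu.apply_sub_smul_eq_of_mem_Icc he hray ⟨hη.le, hηL.le⟩, hye]
    linarith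

theorem measurable_gradient {E : Type*} [NormedAddCommGroup E] [InnerProductSpace ℝ E]
    [CompleteSpace E] [MeasurableSpace E] [BorelSpace E] (u : E → ℝ) :
    Measurable (gradient u) :=
  (InnerProductSpace.toDual ℝ E).symm.continuous.measurable.comp (measurable_fderiv ℝ u)

theorem measurableSet_isTransportRay {E : Type*} [NormedAddCommGroup E] [NormedSpace ℝ E]
    [MeasurableSpace E] [BorelSpace E] [SecondCountableTopology E] {Ω : Set E}
    (hΩ : MeasurableSet Ω) {u : E → ℝ} (hu : Continuous u) (c : ℝ) {T : E → E}
    (hT : Measurable T) : MeasurableSet {x | IsTransportRay Ω u c x (T x)} := by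
  have hcost : Measurable fun x => ‖x - T x‖ := (measurable_id.sub hT).norm
  exact hΩ.inter ((measurableSet_le measurable_const hcost).inter
    ((measurableSet_eq_fun (hu.measurable.sub (hu.measurable.comp hT)) hcost).inter
      (measurableSet_of_differentiableAt ℝ u)))

theorem ae_map_of_ae_comp {α β γ : Type*} [MeasurableSpace α] [MeasurableSpace β]
    [MeasurableSpace γ] {μ : Measure α} {f : α → β} (hf : AEMeasurable f μ) {T : β → γ}
    (hT : AEMeasurable T (μ.map f)) {p : β → γ → Prop}
    (hp : ∀ T' : β → γ, Measurable T' → MeasurableSet {y | p y (T' y)})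
    (h : ∀ᵐ x ∂μ, p (f x) (T (f x))) : ∀ᵐ y ∂μ.map f, p y (T y) := by
  have hmk : ∀ᵐ x ∂μ, T (f x) = hT.mk T (f x) := ae_of_ae_map hf hT.ae_eq_mk
  have hp_mk : ∀ᵐ y ∂μ.map f, p y (hT.mk T y) :=
    (ae_map_iff hf (hp _ hT.measurable_mk)).2 <| by
      filter_upwards [h, hmk] with x hx hx_mk
      rwa [← hx_mk]
  filter_upwards [hp_mk, hT.ae_eq_mk] with y hy hy_mk
  rwa [hy_mk]

theorem ae_apply_mem_of_map_eq {α β : Type*} [MeasurableSpace α] [MeasurableSpace β]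
    {μ : Measure α} {ν : Measure β} [NeZero ν] {T : α → β} (hT : μ.map T = ν) {s : Set β}
    (hνs : ν sᶜ = 0) : ∀ᵐ x ∂μ, T x ∈ s := by
  subst hT
  exact ae_of_ae_map (aemeasurable_of_map_neZero inferInstance) (mem_ae_iff.2 hνs)

section PushForward

variable {X : Type*} [TopologicalSpace X] [T2Space X] [MeasurableSpace X]
  [OpensMeasurableSpace X] {K : Set X} {μ ν : Measure X} [IsFiniteMeasure μ] [NeZero ν]
  {T : X → X} {u : X → ℝ}

theorem Continuous.integrable_of_measure_compl_eq_zero (hK : IsCompact K) (hμK : μ Kᶜ = 0)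
    (hu : Continuous u) : Integrable u μ := by
  rw [← Measure.restrict_eq_self_of_ae_mem (mem_ae_iff.2 hμK)]
  exact hu.continuousOn.integrableOn_compact hK

theorem Continuous.integrable_comp_of_map_eq (hK : IsCompact K) (hνK : ν Kᶜ = 0)
    (hT : μ.map T = ν) (hu : Continuous u) : Integrable (fun x => u (T x)) μ := by
  have : IsFiniteMeasure ν := hT ▸ inferInstance
  exact (integrable_map_measure hu.aestronglyMeasurable
    (aemeasurable_of_map_neZero (hT ▸ inferInstance))).1
    (hT ▸ hu.integrable_of_measure_compl_eq_zero hK hνK)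

theorem Continuous.integrable_sub_comp_of_map_eq (hK : IsCompact K) (hμK : μ Kᶜ = 0)
    (hνK : ν Kᶜ = 0) (hT : μ.map T = ν) (hu : Continuous u) :
    Integrable (fun x => u x - u (T x)) μ :=
  (hu.integrable_of_measure_compl_eq_zero hK hμK).sub (hu.integrable_comp_of_map_eq hK hνK hT)

theorem integral_sub_comp_of_map_eq (hK : IsCompact K) (hμK : μ Kᶜ = 0) (hνK : ν Kᶜ = 0)
    (hT : μ.map T = ν) (hu : Continuous u) :
    ∫ x, (u x - u (T x)) ∂μ = (∫ x, u x ∂μ) - ∫ y, u y ∂ν := by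
  rw [integral_sub (hu.integrable_of_measure_compl_eq_zero hK hμK)
    (hu.integrable_comp_of_map_eq hK hνK hT), ← hT,
    integral_map (aemeasurable_of_map_neZero (hT ▸ inferInstance)) hu.aestronglyMeasurable]

end PushForward

theorem integrable_norm_sub_of_map_eq {E : Type*} [NormedAddCommGroup E] [MeasurableSpace E]
    [BorelSpace E] [SecondCountableTopology E] {Ω : Set E} {μ ν : Measure E}
    [IsFiniteMeasure μ] [NeZero ν] {T : E → E} (hΩ : Bornology.IsBounded Ω)
    (hμΩ : μ Ωᶜ = 0) (hνΩ : ν Ωᶜ = 0) (hT : μ.map T = ν) :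
    Integrable (fun x => ‖x - T x‖) μ := by
  have hTm : AEMeasurable T μ := aemeasurable_of_map_neZero (hT ▸ inferInstance)
  refine Integrable.of_bound (aemeasurable_id.sub hTm).norm.aestronglyMeasurable
    (Metric.diam Ω) ?_
  filter_upwards [mem_ae_iff.2 hμΩ, ae_apply_mem_of_map_eq hT hνΩ] with x hx hTx
  rw [norm_norm, ← dist_eq_norm]
  exact Metric.dist_le_diam_of_mem hΩ hx hTx

section Wasserstein

variable {d : ℕ} {Ω : Set (Euc d)} {μ ν : Measure (Euc d)} [IsFiniteMeasure μ] [NeZero ν]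
  {T : Euc d → Euc d} {u : Euc d → ℝ}

theorem integral_sub_integral_le_integral_norm_sub (hΩ : IsCompact Ω) (hμΩ : μ Ωᶜ = 0)
    (hνΩ : ν Ωᶜ = 0) (hT : μ.map T = ν) (hu : LipschitzWith 1 u) :
    (∫ x, u x ∂μ) - ∫ y, u y ∂ν ≤ ∫ x, ‖x - T x‖ ∂μ := by
  rw [← integral_sub_comp_of_map_eq hΩ hμΩ hνΩ hT hu.continuous]
  exact integral_mono (hu.continuous.integrable_sub_comp_of_map_eq hΩ hμΩ hνΩ hT)
    (integrable_norm_sub_of_map_eq hΩ.isBounded hμΩ hνΩ hT) fun x => hu.sub_le_norm_sub x (T x)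

theorem W1_le_integral_norm_sub (hΩ : IsCompact Ω) (hμΩ : μ Ωᶜ = 0) (hνΩ : ν Ωᶜ = 0)
    (hT : μ.map T = ν) : W1 μ ν ≤ ∫ x, ‖x - T x‖ ∂μ := by
  refine csSup_le ⟨0, fun _ => 0, LipschitzWith.const' 0, by simp⟩ ?_
  rintro _ ⟨v, hv, rfl⟩
  exact integral_sub_integral_le_integral_norm_sub hΩ hμΩ hνΩ hT hv

theorem integral_sub_integral_le_W1 (hΩ : IsCompact Ω) (hμΩ : μ Ωᶜ = 0) (hνΩ : ν Ωᶜ = 0)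
    (hT : μ.map T = ν) (hu : LipschitzWith 1 u) : (∫ x, u x ∂μ) - ∫ y, u y ∂ν ≤ W1 μ ν := by
  refine le_csSup ⟨∫ x, ‖x - T x‖ ∂μ, ?_⟩ ⟨u, hu, rfl⟩
  rintro _ ⟨v, hv, rfl⟩
  exact integral_sub_integral_le_integral_norm_sub hΩ hμΩ hνΩ hT hv

theorem isOptimalMap_of_ae_sub_eq_norm (hΩ : IsCompact Ω) (hμΩ : μ Ωᶜ = 0)
    (hνΩ : ν Ωᶜ = 0) (hT : μ.map T = ν) (hu : LipschitzWith 1 u)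
    (h : ∀ᵐ x ∂μ, u x - u (T x) = ‖x - T x‖) : IsOptimalMap T μ ν := by
  refine ⟨hT, le_antisymm ?_ (W1_le_integral_norm_sub hΩ hμΩ hνΩ hT)⟩
  calc ∫ x, ‖x - T x‖ ∂μ = ∫ x, (u x - u (T x)) ∂μ := integral_congr_ae (h.mono fun _ => Eq.symm)
    _ = (∫ x, u x ∂μ) - ∫ y, u y ∂ν := integral_sub_comp_of_map_eq hΩ hμΩ hνΩ hT hu.continuous
    _ ≤ W1 μ ν := integral_sub_integral_le_W1 hΩ hμΩ hνΩ hT hu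

theorem IsOptimalMap.ae_sub_eq_norm (hΩ : IsCompact Ω) (hμΩ : μ Ωᶜ = 0) (hνΩ : ν Ωᶜ = 0)
    (hT : IsOptimalMap T μ ν) (hu : IsKantorovichPotential u μ ν) :
    ∀ᵐ x ∂μ, u x - u (T x) = ‖x - T x‖ := by
  have hcost := integrable_norm_sub_of_map_eq hΩ.isBounded hμΩ hνΩ hT.1
  have hpot := hu.1.continuous.integrable_sub_comp_of_map_eq hΩ hμΩ hνΩ hT.1
  have hgap : ∫ x, (‖x - T x‖ - (u x - u (T x))) ∂μ = 0 := by
    rw [integral_sub hcost hpot, integral_sub_comp_of_map_eq hΩ hμΩ hνΩ hT.1 hu.1.continuous,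
      hT.2, hu.2, sub_self]
  have hnonneg : 0 ≤ᵐ[μ] fun x => ‖x - T x‖ - (u x - u (T x)) :=
    Eventually.of_forall fun x => sub_nonneg.2 (hu.1.sub_le_norm_sub x (T x))
  filter_upwards [(integral_eq_zero_iff_of_nonneg_ae hnonneg (hcost.sub hpot)).1 hgap] with x hx
  exact (sub_eq_zero.1 hx).symm

end Wasserstein

section MinimalLength

variable {d : ℕ} {μ : Measure (Euc d)} {T : Euc d → Euc d}

theorem ae_ell0_le : ∀ᵐ x ∂μ, ell0 T μ ≤ ‖x - T x‖ :=
  ae_essInf_le (isBoundedUnder_of_eventually_ge (Eventually.of_forall fun _ => norm_nonneg _))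

/-- `ell0` is a `liminf` along `ae μ`, meaningful only for essentially bounded costs. -/
theorem le_ell0_of_ae [NeZero μ] {c B : ℝ} (hc : ∀ᵐ x ∂μ, c ≤ ‖x - T x‖)
    (hB : ∀ᵐ x ∂μ, ‖x - T x‖ ≤ B) : c ≤ ell0 T μ :=
  le_liminf_of_le (isCoboundedUnder_ge_of_eventually_le _ hB) hc

end MinimalLength

def IsRayTransport {E : Type*} [NormedAddCommGroup E] [NormedSpace ℝ E] [MeasurableSpace E]
    (Ω : Set E) (u : E → ℝ) (c : ℝ) (T : E → E) (μ ν : Measure E) : Prop :=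
  μ.map T = ν ∧ ∀ᵐ x ∂μ, IsTransportRay Ω u c x (T x)

theorem IsRayTransport.step {E : Type*} [NormedAddCommGroup E] [InnerProductSpace ℝ E]
    [CompleteSpace E] [MeasurableSpace E] [BorelSpace E] [SecondCountableTopology E]
    {Ω : Set E} {u : E → ℝ} {c η : ℝ} {T : E → E} {μ ν : Measure E} [NeZero ν]
    (hΩ : Convex ℝ Ω) (hΩm : MeasurableSet Ω) (hνΩ : ν Ωᶜ = 0) (hu : LipschitzWith 1 u)
    (h : IsRayTransport Ω u c T μ ν) (hη : 0 < η) (hηc : η < c) :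
    IsRayTransport Ω u (c - η) (T ∘ fun z => z + η • gradient u z)
      (μ.map fun x => x - η • gradient u x) ν := by
  obtain ⟨hmap, hray⟩ := h
  set f : E → E := fun x => x - η • gradient u x
  set g : E → E := fun z => z + η • gradient u z
  have hfm : Measurable f := measurable_id.sub ((measurable_gradient u).const_smul η)
  have hgm : Measurable g := measurable_id.add ((measurable_gradient u).const_smul η)
  have hstep : ∀ᵐ x ∂μ, g (f x) = x ∧ IsTransportRay Ω u (c - η) (f x) (T x) := by
    filter_upwards [hray, ae_apply_mem_of_map_eq hmap hνΩ] with x hx hTx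
    exact hx.sub_smul_gradient hΩ hu hTx hη hηc
  have hgf : (μ.map f).map g = μ := by
    rw [Measure.map_map hgm hfm,
      Measure.map_congr (hstep.mono fun _ hx => hx.1 : g ∘ f =ᵐ[μ] id), Measure.map_id]
  have hTm : AEMeasurable T ((μ.map f).map g) := by
    rw [hgf]
    exact aemeasurable_of_map_neZero (hmap ▸ inferInstance)
  refine ⟨?_, ae_map_of_ae_comp hfm.aemeasurable (hTm.comp_aemeasurable hgm.aemeasurable)
    (fun _ hT' => measurableSet_isTransportRay hΩm hu.continuous _ hT') ?_⟩
  · rw [← hTm.map_map_of_aemeasurable hgm.aemeasurable, hgf, hmap]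
  · filter_upwards [hstep] with x hx
    rw [Function.comp_apply, hx.1]
    exact hx.2

section RayTransport

variable {d : ℕ} {Ω : Set (Euc d)} {u : Euc d → ℝ} {c : ℝ} {T : Euc d → Euc d}
  {μ ν : Measure (Euc d)} [IsProbabilityMeasure ν]

theorem IsOptimalMap.isRayTransport [IsFiniteMeasure μ] (hΩ : IsCompact Ω) (hμΩ : μ Ωᶜ = 0)
    (hνΩ : ν Ωᶜ = 0) (hac : μ ≪ volume) (hT : IsOptimalMap T μ ν)
    (hu : IsKantorovichPotential u μ ν) : IsRayTransport Ω u (ell0 T μ) T μ ν := by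
  refine ⟨hT.1, ?_⟩
  filter_upwards [mem_ae_iff.2 hμΩ, ae_ell0_le, hT.ae_sub_eq_norm hΩ hμΩ hνΩ hu,
    hac.ae_le hu.1.ae_differentiableAt] with x hx hℓ hpot hd
  exact ⟨hx, hℓ, hpot, hd⟩

theorem IsRayTransport.isProbabilityMeasure (h : IsRayTransport Ω u c T μ ν) :
    IsProbabilityMeasure μ := by
  have : IsProbabilityMeasure (μ.map T) := h.1 ▸ inferInstance
  exact Measure.isProbabilityMeasure_of_map T

theorem IsRayTransport.isOptimalMap (hΩ : IsCompact Ω) (hνΩ : ν Ωᶜ = 0)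
    (hu : LipschitzWith 1 u) (h : IsRayTransport Ω u c T μ ν) : IsOptimalMap T μ ν :=
  have := h.isProbabilityMeasure
  isOptimalMap_of_ae_sub_eq_norm hΩ (mem_ae_iff.1 (h.2.mono fun _ hx => hx.1)) hνΩ h.1 hu
    (h.2.mono fun _ hx => hx.2.2.1)

theorem IsRayTransport.le_ell0 (hΩ : Bornology.IsBounded Ω) (hνΩ : ν Ωᶜ = 0)
    (h : IsRayTransport Ω u c T μ ν) : c ≤ ell0 T μ := by
  have := h.isProbabilityMeasure
  refine le_ell0_of_ae (h.2.mono fun _ hx => hx.2.1) (B := Metric.diam Ω) ?_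
  filter_upwards [h.2, ae_apply_mem_of_map_eq h.1 hνΩ] with x hx hTx
  rw [← dist_eq_norm]
  exact Metric.dist_le_diam_of_mem hΩ hx.1 hTx

end RayTransport

theorem lt_pow_of_le_ceil_logb_sub_one {a b : ℝ} (hb₀ : 0 < b) (hb₁ : b < 1) (ha : 0 < a)
    {m : ℕ} (hm : (m : ℤ) ≤ ⌈Real.logb b a⌉ - 1) : a < b ^ m := by
  have hlt : (m : ℝ) < Real.logb b a := by
    have hceil := Int.ceil_lt_add_one (Real.logb b a)
    have hm' : (m : ℝ) ≤ ⌈Real.logb b a⌉ - 1 := by exact_mod_cast hm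
    linarith
  simpa using (Real.lt_logb_iff_rpow_lt_of_base_lt_one hb₀ hb₁ ha).1 hlt

theorem sub_mul_one_sub_pow_pos {ℓ W θ : ℝ} (hθ : θ ∈ Ioo 0 1) (hℓ : 0 < ℓ) (hℓW : ℓ < W)
    {m : ℕ} (hm : (m : ℤ) ≤ ⌈Real.logb (1 - θ) (1 - ℓ / W)⌉ - 1) :
    0 < ℓ - W * (1 - (1 - θ) ^ m) := by
  have hW : 0 < W := hℓ.trans hℓW
  have ha : 0 < 1 - ℓ / W := by rw [sub_pos, div_lt_one hW]; exact hℓW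
  have hlt := lt_pow_of_le_ceil_logb_sub_one (by linarith [hθ.2]) (by linarith [hθ.1]) ha hm
  have hfactor : ℓ - W * (1 - (1 - θ) ^ m) = W * ((1 - θ) ^ m - (1 - ℓ / W)) := by
    field_simp
    ring
  rw [hfactor]
  exact mul_pos hW (sub_pos.2 hlt)

theorem ttc_composed_maps_optimal_general {d : ℕ} (Ω : Set (Euc d))
    (hΩc : IsCompact Ω) (hΩconv : Convex ℝ Ω)
    (μ ν : Measure (Euc d)) [IsProbabilityMeasure μ] [IsProbabilityMeasure ν]
    (hμΩ : μ Ωᶜ = 0) (hνΩ : ν Ωᶜ = 0) (hac : μ ≪ volume)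
    (θ : ℝ) (hθ : θ ∈ Set.Ioo (0:ℝ) 1)
    (u₀ : Euc d → ℝ) (hu₀ : IsKantorovichPotential u₀ μ ν)
    (T₀ : Euc d → Euc d) (hT₀ : IsOptimalMap T₀ μ ν)
    (hℓpos : 0 < ell0 T₀ μ) (hℓlt : ell0 T₀ μ < W1 μ ν)
    (η : ℕ → ℝ) (hη : ∀ k, η k = θ * (1 - θ) ^ k * W1 μ ν)
    (μseq : ℕ → Measure (Euc d)) (fseq gseq : ℕ → Euc d → Euc d)
    (hμ0 : μseq 0 = μ)
    (hf : ∀ n x, DifferentiableAt ℝ u₀ x → fseq n x = x - η n • gradient u₀ x)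
    (hf' : ∀ n x, ¬ DifferentiableAt ℝ u₀ x → fseq n x = x)
    (hg : ∀ n x, DifferentiableAt ℝ u₀ x → gseq n x = x + η n • gradient u₀ x)
    (hg' : ∀ n x, ¬ DifferentiableAt ℝ u₀ x → gseq n x = x)
    (hiter : ∀ n, μseq (n + 1) = Measure.map (fseq n) (μseq n))
    (Tseq : ℕ → Euc d → Euc d)
    (hT0 : Tseq 0 = T₀)
    (hTsucc : ∀ n, Tseq (n + 1) = Tseq n ∘ gseq n)
    (N : ℤ) (hN : N = ⌈Real.logb (1 - θ) (1 - ell0 T₀ μ / W1 μ ν)⌉ - 1) :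
    ∀ n : ℕ, (n : ℤ) ≤ N → IsOptimalMap (Tseq n) (μseq n) ν ∧
      ell0 T₀ μ - W1 μ ν * (1 - (1 - θ) ^ n) ≤ ell0 (Tseq n) (μseq n) := by
  set c : ℕ → ℝ := fun n => ell0 T₀ μ - W1 μ ν * (1 - (1 - θ) ^ n)
  have hc_succ (n : ℕ) : c (n + 1) = c n - η n := by simp only [c, hη]; ring
  have hη_pos (n : ℕ) : 0 < η n := by
    rw [hη]
    exact mul_pos (mul_pos hθ.1 (pow_pos (sub_pos.2 hθ.2) n)) (hℓpos.trans hℓlt)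
  -- `gradient` is `0` where `u₀` is not differentiable, so these formulas hold everywhere.
  have hfseq (n : ℕ) : fseq n = fun x => x - η n • gradient u₀ x := funext fun x =>
    (em (DifferentiableAt ℝ u₀ x)).elim (hf n x) fun hx => by
      rw [hf' n x hx, gradient_eq_zero_of_not_differentiableAt hx, smul_zero, sub_zero]
  have hgseq (n : ℕ) : gseq n = fun x => x + η n • gradient u₀ x := funext fun x =>
    (em (DifferentiableAt ℝ u₀ x)).elim (hg n x) fun hx => by
      rw [hg' n x hx, gradient_eq_zero_of_not_differentiableAt hx, smul_zero, add_zero]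
  have hray (n : ℕ) (hn : (n : ℤ) ≤ N) : IsRayTransport Ω u₀ (c n) (Tseq n) (μseq n) ν := by
    induction n with
    | zero => simpa [c, hT0, hμ0] using hT₀.isRayTransport hΩc hμΩ hνΩ hac hu₀
    | succ n ih =>
      rw [hTsucc, hiter, hfseq, hgseq, hc_succ]
      refine (ih (by omega)).step hΩconv hΩc.isClosed.measurableSet hνΩ hu₀.1 (hη_pos n) ?_
      linarith [hc_succ n, sub_mul_one_sub_pow_pos hθ hℓpos hℓlt (hN ▸ hn)]
  exact fun n hn => ⟨(hray n hn).isOptimalMap hΩc hνΩ hu₀.1,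
    (hray n hn).le_ell0 hΩc.isBounded hνΩ⟩

/-- the composed maps `T_n = T_{n-1} ∘ g_{n-1}` are optimal transport
maps for `(μ_n, ν)` with `ℓ₀(T_n) ≥ ℓ₀(T₀) - W₁(μ₀,ν)(1 - (1-θ)^n)`, up to `N(θ)`. -/
theorem ttc_composed_maps_optimal {d : ℕ} (Ω : Set (Euc d))
    (hΩc : IsCompact Ω) (hΩconv : Convex ℝ Ω)
    (μ ν : Measure (Euc d)) [IsProbabilityMeasure μ] [IsProbabilityMeasure ν]
    (hμΩ : μ Ωᶜ = 0) (hνΩ : ν Ωᶜ = 0) (hac : μ ≪ volume)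
    (θ : ℝ) (hθ : θ ∈ Set.Ioo (0:ℝ) 1)
    (u₀ : Euc d → ℝ) (hu₀ : IsKantorovichPotential u₀ μ ν)
    (T₀ : Euc d → Euc d) (hT₀ : IsOptimalMap T₀ μ ν)
    (hℓpos : 0 < ell0 T₀ μ) (hℓlt : ell0 T₀ μ < W1 μ ν)
    (η : ℕ → ℝ) (hη : ∀ k, η k = θ * (1 - θ) ^ k * W1 μ ν)
    (μseq : ℕ → Measure (Euc d)) (fseq gseq : ℕ → Euc d → Euc d)
    (hμ0 : μseq 0 = μ)
    (hfm : ∀ n, Measurable (fseq n))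
    (hf : ∀ n x, DifferentiableAt ℝ u₀ x → fseq n x = x - η n • gradient u₀ x)
    (hf' : ∀ n x, ¬ DifferentiableAt ℝ u₀ x → fseq n x = x)
    (hg : ∀ n x, DifferentiableAt ℝ u₀ x → gseq n x = x + η n • gradient u₀ x)
    (hg' : ∀ n x, ¬ DifferentiableAt ℝ u₀ x → gseq n x = x)
    (hiter : ∀ n, μseq (n + 1) = Measure.map (fseq n) (μseq n))
    (Tseq : ℕ → Euc d → Euc d)
    (hT0 : Tseq 0 = T₀)
    (hTsucc : ∀ n, Tseq (n + 1) = Tseq n ∘ gseq n)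
    (N : ℤ) (hN : N = ⌈Real.logb (1 - θ) (1 - ell0 T₀ μ / W1 μ ν)⌉ - 1) :
    ∀ n : ℕ, (n : ℤ) ≤ N → IsOptimalMap (Tseq n) (μseq n) ν ∧
      ell0 T₀ μ - W1 μ ν * (1 - (1 - θ) ^ n) ≤ ell0 (Tseq n) (μseq n) :=
  ttc_composed_maps_optimal_general Ω hΩc hΩconv μ ν hμΩ hνΩ hac θ hθ u₀ hu₀ T₀ hT₀ hℓpos hℓlt η hη
    μseq fseq gseq hμ0 hf hf' hg hg' hiter Tseq hT0 hTsucc N hN
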